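/- arXiv:2510.07898 — 5 statements merged into one kernel-verified Lean document; each statement's English description precedes it below -/
import Mathlib

section
/- For every t_c > 0 and ω₀, Δt, τ ∈ ℝ, ∫_ℝ (t_c/√π)·exp(−t_c²·(ω−ω₀)²)·(1 + cos(ω·Δt))·cos(ω·τ) dω = exp(−τ²/(4t_c²))·cos(ω₀·τ) + (1/2)·exp(−(τ+Δt)²/(4t_c²))·cos(ω₀·(τ+Δt)) + (1/2)·exp(−(τ−Δt)²/(4t_c²))·cos(ω₀·(τ−Δt)). -/
/-!
Product-to-sum turns `(1 + cos(ωΔt)) cos(ωτ)` into `cos(τω) + ½cos((τ+Δt)ω) + ½cos((τ−Δt)ω)`,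
so the integral is a combination of three cosine transforms of the Gaussian centred at `ω₀`.
Each is the real part of `∫ exp(−b(x−μ)² + icx) dx = √(π/b)·exp(−c²/(4b) + icμ)`, which is
the Gaussian integral after completing the square.
-/

open MeasureTheory Complex

lemma integrable_cexp_neg_mul_sq_sub_add_mul_I {b : ℝ} (hb : 0 < b) (μ c : ℝ) :
    Integrable fun x : ℝ ↦ cexp (-b * (x - μ) ^ 2 + c * x * I) := by
  refine (integrable_cexp_quadratic (b := b) (by simpa using hb) (2 * b * μ + c * I)
    (-b * μ ^ 2)).congr (.of_forall fun x ↦ ?_)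
  ring_nf

lemma integral_cexp_neg_mul_sq_sub_add_mul_I {b : ℝ} (hb : 0 < b) (μ c : ℝ) :
    ∫ x : ℝ, cexp (-b * (x - μ) ^ 2 + c * x * I)
      = Real.sqrt (Real.pi / b) * cexp (-c ^ 2 / (4 * b) + c * μ * I) := by
  have hb' : (b : ℂ) ≠ 0 := by exact_mod_cast hb.ne'
  have hquad (x : ℝ) : -b * (x - μ) ^ 2 + c * x * I
      = -b * x ^ 2 + (2 * b * μ + c * I) * x + -b * μ ^ 2 := by ring
  simp_rw [hquad]
  rw [integral_cexp_quadratic (by simpa using hb), neg_neg, Real.sqrt_eq_rpow,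
    ofReal_cpow (by positivity)]
  push_cast
  congr 2
  field_simp
  ring_nf
  rw [I_sq]
  ring

lemma re_cexp_ofReal_add_ofReal_mul_I (a θ : ℝ) :
    (cexp (a + θ * I)).re = Real.exp a * Real.cos θ := by
  simp [exp_re]

lemma re_cexp_neg_mul_sq_sub_add_mul_I (b μ c x : ℝ) :
    (cexp (-b * (x - μ) ^ 2 + c * x * I)).re = Real.exp (-b * (x - μ) ^ 2) * Real.cos (c * x) := by
  rw [← re_cexp_ofReal_add_ofReal_mul_I]
  push_cast
  rfl

lemma integrable_exp_neg_mul_sq_sub_mul_cos {b : ℝ} (hb : 0 < b) (μ c : ℝ) :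
    Integrable fun x : ℝ ↦ Real.exp (-b * (x - μ) ^ 2) * Real.cos (c * x) := by
  simpa only [RCLike.re_to_complex, re_cexp_neg_mul_sq_sub_add_mul_I]
    using (integrable_cexp_neg_mul_sq_sub_add_mul_I hb μ c).re

lemma integral_exp_neg_mul_sq_sub_mul_cos {b : ℝ} (hb : 0 < b) (μ c : ℝ) :
    ∫ x : ℝ, Real.exp (-b * (x - μ) ^ 2) * Real.cos (c * x)
      = Real.sqrt (Real.pi / b) * Real.exp (-c ^ 2 / (4 * b)) * Real.cos (c * μ) := by
  have h := congrArg re (integral_cexp_neg_mul_sq_sub_add_mul_I hb μ c)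
  rw [← RCLike.re_to_complex, ← integral_re (integrable_cexp_neg_mul_sq_sub_add_mul_I hb μ c),
    re_ofReal_mul] at h
  simp only [RCLike.re_to_complex, re_cexp_neg_mul_sq_sub_add_mul_I] at h
  rw [h, mul_assoc (Real.sqrt (Real.pi / b)), ← re_cexp_ofReal_add_ofReal_mul_I]
  push_cast
  rfl

/-- Expectation of the score-function summand `cos(ν·τ)` under the lensed single-photon
frequency distribution `p(ω|Δt) = (t_c/√π)·exp(−t_c²(ω−ω₀)²)·(1 + cos(ωΔt))`. -/
theorem score_function_expectation
    (tc : ℝ) (htc : 0 < tc) (ω₀ Δt τ : ℝ) :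
    ∫ ω : ℝ, (tc / Real.sqrt Real.pi) * Real.exp (-(tc ^ 2) * (ω - ω₀) ^ 2)
        * (1 + Real.cos (ω * Δt)) * Real.cos (ω * τ)
      = Real.exp (-(τ ^ 2) / (4 * tc ^ 2)) * Real.cos (ω₀ * τ)
        + (1 / 2) * Real.exp (-((τ + Δt) ^ 2) / (4 * tc ^ 2)) * Real.cos (ω₀ * (τ + Δt))
        + (1 / 2) * Real.exp (-((τ - Δt) ^ 2) / (4 * tc ^ 2)) * Real.cos (ω₀ * (τ - Δt)) := by
  have hb : 0 < tc ^ 2 := by positivity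
  set g : ℝ → ℝ → ℝ := fun c ω ↦ Real.exp (-(tc ^ 2) * (ω - ω₀) ^ 2) * Real.cos (c * ω) with hg
  have hsplit (ω : ℝ) : (tc / Real.sqrt Real.pi) * Real.exp (-(tc ^ 2) * (ω - ω₀) ^ 2)
        * (1 + Real.cos (ω * Δt)) * Real.cos (ω * τ)
      = tc / Real.sqrt Real.pi * (g τ ω + (1 / 2) * g (τ + Δt) ω + (1 / 2) * g (τ - Δt) ω) := by
    simp only [hg, add_mul, sub_mul, Real.cos_add, Real.cos_sub]
    ring_nf
  have hint (c : ℝ) : Integrable (g c) := integrable_exp_neg_mul_sq_sub_mul_cos hb ω₀ c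
  simp_rw [hsplit]
  rw [integral_const_mul, integral_add, integral_add, integral_const_mul, integral_const_mul]
  · simp only [hg, integral_exp_neg_mul_sq_sub_mul_cos hb, Real.sqrt_div Real.pi_pos.le,
      Real.sqrt_sq htc.le]
    field_simp
  all_goals fun_prop
end

section
/- Let ν₁, …, ν_n be i.i.d. real-valued random variables on a probability space. Let Θ be a finite set of real numbers of cardinality M such that E[cos(τ·ν₁)] ≤ 0 for every τ ∈ Θ, and let τ* ∈ ℝ satisfy E[cos(τ*·ν₁)] ≥ 1/2. If n ≥ 32·ln(20·(M+1)), then with probability at least 0.95 the following hold simultaneously: Σ_{j=1}^n cos(τ*·ν_j) ≥ n/4, and Σ_{j=1}^n cos(τ·ν_j) < n/4 for every τ ∈ Θ. -/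
/-!
Every score `∑ j, cos (τ * ν j)` is a sum of `n` independent summands with values in
`[-1, 1]`, so by Hoeffding's inequality it deviates by `n / 4` from its mean, in the relevant
direction, with probability at most `exp (-n / 32)`. The bound on `n` gives
`(M + 1) * exp (-n / 32) ≤ 1 / 20`, and a union bound over the good candidate and the `M` bad
ones leaves probability at least `0.95`.
-/

open MeasureTheory ProbabilityTheory Real Finset

section Hoeffding

variable {Ω ι : Type*} [MeasurableSpace Ω] {μ : Measure Ω} [IsProbabilityMeasure μ]
  {X : ι → Ω → ℝ} {a b : ℝ}

theorem measureReal_sum_sub_integral_ge_le (hindep : iIndepFun X μ)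
    (hmeas : ∀ i, AEMeasurable (X i) μ) (hbdd : ∀ i, ∀ᵐ ω ∂μ, X i ω ∈ Set.Icc a b)
    (s : Finset ι) {ε : ℝ} (hε : 0 ≤ ε) :
    μ.real {ω | ε ≤ ∑ i ∈ s, (X i ω - μ[X i])} ≤
      exp (-2 * ε ^ 2 / (#s * (b - a) ^ 2)) := by
  have hcentered : iIndepFun (fun i ω => X i ω - μ[X i]) μ :=
    hindep.comp (fun i x => x - ∫ ω, X i ω ∂μ) fun _ => measurable_sub_const _
  have h := HasSubgaussianMGF.measure_sum_ge_le_of_iIndepFun (s := s) hcentered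
    (fun i _ => hasSubgaussianMGF_of_mem_Icc (hmeas i) (hbdd i)) hε
  refine h.trans_eq (congrArg exp ?_)
  push_cast [sum_const, nsmul_eq_mul, Real.norm_eq_abs, div_pow, sq_abs]
  rw [show (2 : ℝ) * (#s * ((b - a) ^ 2 / 2 ^ 2)) = #s * (b - a) ^ 2 / 2 by ring,
    div_div_eq_mul_div]
  ring

theorem measureReal_sum_ge_le_of_integral_le (hindep : iIndepFun X μ)
    (hmeas : ∀ i, AEMeasurable (X i) μ) (hbdd : ∀ i, ∀ᵐ ω ∂μ, X i ω ∈ Set.Icc a b)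
    {s : Finset ι} {m : ℝ} (hm : ∀ i ∈ s, μ[X i] ≤ m) {ε : ℝ} (hε : 0 ≤ ε) :
    μ.real {ω | #s * m + ε ≤ ∑ i ∈ s, X i ω} ≤
      exp (-2 * ε ^ 2 / (#s * (b - a) ^ 2)) := by
  refine (measureReal_mono fun ω hω => ?_).trans
    (measureReal_sum_sub_integral_ge_le hindep hmeas hbdd s hε)
  have hsum : ∑ i ∈ s, μ[X i] ≤ #s * m := by
    simpa using sum_le_sum hm
  simp only [Set.mem_ofPred_eq, sum_sub_distrib] at hω ⊢
  linarith

theorem measureReal_sum_le_le_of_le_integral (hindep : iIndepFun X μ)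
    (hmeas : ∀ i, AEMeasurable (X i) μ) (hbdd : ∀ i, ∀ᵐ ω ∂μ, X i ω ∈ Set.Icc a b)
    {s : Finset ι} {m : ℝ} (hm : ∀ i ∈ s, m ≤ μ[X i]) {ε : ℝ} (hε : 0 ≤ ε) :
    μ.real {ω | ∑ i ∈ s, X i ω ≤ #s * m - ε} ≤
      exp (-2 * ε ^ 2 / (#s * (b - a) ^ 2)) := by
  have h := measureReal_sum_ge_le_of_integral_le (X := fun i ω => -X i ω) (a := -b) (b := -a)
    (hindep.comp (fun _ x => -x) fun _ => measurable_neg) (fun i => (hmeas i).neg)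
    (fun i => (hbdd i).mono fun ω hω => ⟨neg_le_neg hω.2, neg_le_neg hω.1⟩)
    (m := -m) (fun i hi => by simpa [integral_neg] using hm i hi) hε
  convert h using 3
  · ext ω
    simp only [sum_neg_distrib]
    constructor <;> intro hω <;> linarith
  · ring

end Hoeffding

theorem neg_two_mul_quarter_sq_div (x : ℝ) :
    -2 * (x / 4) ^ 2 / (x * (1 - -1) ^ 2) = -x / 32 := by
  rcases eq_or_ne x 0 with rfl | hx
  · simp
  · field_simp
    ring

section QuarterDeviation

variable {Ω : Type*} [MeasurableSpace Ω] {μ : Measure Ω} [IsProbabilityMeasure μ]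
  {n : ℕ} {X : Fin n → Ω → ℝ}

theorem measureReal_quarter_le_sum_le (hindep : iIndepFun X μ)
    (hmeas : ∀ i, AEMeasurable (X i) μ)
    (hbdd : ∀ i, ∀ᵐ ω ∂μ, X i ω ∈ Set.Icc (-1) 1)
    (hm : ∀ i, μ[X i] ≤ 0) :
    μ.real {ω | (n : ℝ) / 4 ≤ ∑ i, X i ω} ≤ exp (-(n : ℝ) / 32) := by
  have h := measureReal_sum_ge_le_of_integral_le hindep hmeas hbdd (s := univ)
    (fun i _ => hm i) (ε := n / 4) (by positivity)
  simpa only [card_univ, Fintype.card_fin, mul_zero, zero_add, neg_two_mul_quarter_sq_div]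
    using h

theorem measureReal_sum_le_quarter_le (hindep : iIndepFun X μ)
    (hmeas : ∀ i, AEMeasurable (X i) μ)
    (hbdd : ∀ i, ∀ᵐ ω ∂μ, X i ω ∈ Set.Icc (-1) 1)
    (hm : ∀ i, 1 / 2 ≤ μ[X i]) :
    μ.real {ω | ∑ i, X i ω ≤ (n : ℝ) / 4} ≤ exp (-(n : ℝ) / 32) := by
  have h := measureReal_sum_le_le_of_le_integral hindep hmeas hbdd (s := univ)
    (fun i _ => hm i) (ε := n / 4) (by positivity)
  rw [card_univ, Fintype.card_fin, neg_two_mul_quarter_sq_div] at h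
  convert h using 5
  ring

end QuarterDeviation

theorem le_measureReal_setOf_and_forall {Ω α : Type*} [MeasurableSpace Ω] {μ : Measure Ω}
    [IsProbabilityMeasure μ] {p : Ω → Prop} {q : α → Ω → Prop} (s : Finset α) {δ : ℝ}
    (hp : μ.real {ω | ¬ p ω} ≤ δ) (hq : ∀ a ∈ s, μ.real {ω | ¬ q a ω} ≤ δ) :
    1 - (#s + 1) * δ ≤ μ.real {ω | p ω ∧ ∀ a ∈ s, q a ω} := by
  set A := {ω | p ω ∧ ∀ a ∈ s, q a ω}
  have hcompl : Aᶜ ⊆ {ω | ¬ p ω} ∪ ⋃ a ∈ s, {ω | ¬ q a ω} := by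
    intro ω hω
    by_cases hpω : p ω
    · obtain ⟨a, ha, hqa⟩ : ∃ a ∈ s, ¬ q a ω := by
        simpa [A, hpω] using hω
      exact Or.inr (Set.mem_biUnion ha hqa)
    · exact Or.inl hpω
  have hcover : 1 ≤ μ.real A + μ.real Aᶜ := by
    simpa [Set.union_compl_self] using measureReal_union_le (μ := μ) A Aᶜ
  have hunion : μ.real Aᶜ ≤ δ + #s * δ :=
    calc μ.real Aᶜ ≤ μ.real {ω | ¬ p ω} + μ.real (⋃ a ∈ s, {ω | ¬ q a ω}) :=
          (measureReal_mono hcompl).trans (measureReal_union_le _ _)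
      _ ≤ δ + ∑ a ∈ s, μ.real {ω | ¬ q a ω} :=
          add_le_add hp (measureReal_biUnion_finset_le s _)
      _ ≤ δ + #s * δ := by simpa using add_le_add_left (sum_le_sum hq) δ
  linarith

theorem card_succ_mul_exp_le {M n : ℕ} (hn : (32 : ℝ) * Real.log (20 * (M + 1)) ≤ n) :
    (M + 1) * exp (-(n : ℝ) / 32) ≤ 1 / 20 := by
  have hpos : (0 : ℝ) < 20 * (M + 1) := by positivity
  have hexp : 20 * (M + 1) ≤ exp ((n : ℝ) / 32) :=
    calc (20 * (M + 1) : ℝ) = exp (Real.log (20 * (M + 1))) := (exp_log hpos).symm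
      _ ≤ exp ((n : ℝ) / 32) := exp_le_exp.mpr (by linarith)
  rw [neg_div, exp_neg, ← div_eq_mul_inv, div_le_div_iff₀ (exp_pos _) (by norm_num)]
  linarith

theorem delay_finding_correctness_general
    {Ω : Type*} [MeasurableSpace Ω] (μ : Measure Ω) [IsProbabilityMeasure μ]
    (n : ℕ) (ν : Fin n → Ω → ℝ)
    (hmeas : ∀ j, Measurable (ν j))
    (hindep : iIndepFun ν μ)
    (Θ : Finset ℝ)
    (hbad : ∀ τ ∈ Θ, ∀ j, (∫ ω, Real.cos (τ * ν j ω) ∂μ) ≤ 0)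
    (τstar : ℝ)
    (hgood : ∀ j, (1 / 2 : ℝ) ≤ ∫ ω, Real.cos (τstar * ν j ω) ∂μ)
    (hn : (32 : ℝ) * Real.log (20 * (Θ.card + 1)) ≤ n) :
    ENNReal.ofReal 0.95 ≤
      μ {ω | (n : ℝ) / 4 ≤ ∑ j, Real.cos (τstar * ν j ω) ∧
             ∀ τ ∈ Θ, ∑ j, Real.cos (τ * ν j ω) < (n : ℝ) / 4} := by
  have hscore_indep : ∀ τ, iIndepFun (fun j ω => cos (τ * ν j ω)) μ := fun τ =>
    hindep.comp _ fun _ => (measurable_const_mul τ).cos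
  have hscore_meas : ∀ τ j, AEMeasurable (fun ω => cos (τ * ν j ω)) μ := fun τ j =>
    ((hmeas j).const_mul τ).cos.aemeasurable
  have hscore_bdd : ∀ τ j, ∀ᵐ ω ∂μ, cos (τ * ν j ω) ∈ Set.Icc (-1) 1 := fun τ j =>
    ae_of_all _ fun ω => ⟨neg_one_le_cos _, cos_le_one _⟩
  have hgood_tail :
      μ.real {ω | ¬ (n : ℝ) / 4 ≤ ∑ j, cos (τstar * ν j ω)} ≤ exp (-n / 32) :=
    (measureReal_mono fun _ hω => (not_le.mp hω).le).trans <|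
      measureReal_sum_le_quarter_le (hscore_indep τstar) (hscore_meas τstar) (hscore_bdd τstar)
        hgood
  have hbad_tail :
      ∀ τ ∈ Θ, μ.real {ω | ¬ ∑ j, cos (τ * ν j ω) < n / 4} ≤ exp (-n / 32) :=
    fun τ hτ => (measureReal_mono fun _ hω => not_lt.mp hω).trans <|
      measureReal_quarter_le_sum_le (hscore_indep τ) (hscore_meas τ) (hscore_bdd τ) (hbad τ hτ)
  refine ENNReal.ofReal_le_of_le_toReal <|
    le_trans ?_ (le_measureReal_setOf_and_forall Θ hgood_tail hbad_tail)
  linarith [card_succ_mul_exp_le hn]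

/-- Correctness and sample complexity of the sample-efficient delay-finding algorithm:
given `n` i.i.d. frequency samples `ν₁,…,ν_n`, a finite set `Θ` of `M` bad candidates
whose score summands have nonpositive mean, and a good candidate `τ*` whose score summand
has mean at least `1/2`, if `n ≥ 32·ln(20·(M+1))` then with probability at least `0.95`
the good candidate's score is at least `n/4` while every bad candidate's score is below
`n/4`. -/
theorem delay_finding_correctness
    {Ω : Type*} [MeasurableSpace Ω] (μ : Measure Ω) [IsProbabilityMeasure μ]
    (n : ℕ) (ν : Fin n → Ω → ℝ)
    (hmeas : ∀ j, Measurable (ν j))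
    (hindep : iIndepFun ν μ)
    (hident : ∀ i j, IdentDistrib (ν i) (ν j) μ μ)
    (Θ : Finset ℝ)
    (hbad : ∀ τ ∈ Θ, ∀ j, (∫ ω, Real.cos (τ * ν j ω) ∂μ) ≤ 0)
    (τstar : ℝ)
    (hgood : ∀ j, (1 / 2 : ℝ) ≤ ∫ ω, Real.cos (τstar * ν j ω) ∂μ)
    (hn : (32 : ℝ) * Real.log (20 * (Θ.card + 1)) ≤ n) :
    ENNReal.ofReal 0.95 ≤
      μ {ω | (n : ℝ) / 4 ≤ ∑ j, Real.cos (τstar * ν j ω) ∧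
             ∀ τ ∈ Θ, ∑ j, Real.cos (τ * ν j ω) < (n : ℝ) / 4} :=
  delay_finding_correctness_general μ n ν hmeas hindep Θ hbad τstar hgood hn
end

section
/- Let Q ∈ (0, 1] and let ν₁, …, ν_n be i.i.d. real-valued random variables on a probability space. Let Θ be a finite set of real numbers of cardinality M such that E[cos(τ·ν₁)] ≤ 0 for every τ ∈ Θ, and let τ* ∈ ℝ satisfy E[cos(τ*·ν₁)] ≥ Q/2. If n ≥ (32/Q²)·ln(20·(M+1)), then with probability at least 0.95 the following hold simultaneously: Σ_{j=1}^n cos(τ*·ν_j) ≥ n·Q/4, and Σ_{j=1}^n cos(τ·ν_j) < n·Q/4 for every τ ∈ Θ. -/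
/-!
Every score `∑ⱼ cos (τ * ν j)` is a sum of `n` independent variables with values in `[-1, 1]`,
so by Hoeffding's inequality it exceeds its mean by `s`, or falls below it by `s`, with probability
at most `exp (-s² / (2n))`. The mean is `≤ 0` for a bad candidate and `≥ nQ/2` for `τstar`, so the
threshold `nQ/4` is at distance at least `nQ/4` from every mean, and each of the `M + 1` failure
events has probability at most `exp (-nQ²/32) ≤ 1 / (20 (M + 1))` by the choice of `n`; a union
bound finishes the proof.
-/

open MeasureTheory ProbabilityTheory Real Finset

section Hoeffding

variable {Ω ι : Type*} [MeasurableSpace Ω] {μ : Measure Ω} [IsProbabilityMeasure μ]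
  {X : ι → Ω → ℝ} {a b ε : ℝ}

theorem measure_sum_sub_integral_ge_le_of_mem_Icc (hindep : iIndepFun X μ)
    (hm : ∀ i, AEMeasurable (X i) μ) (hb : ∀ i, ∀ᵐ ω ∂μ, X i ω ∈ Set.Icc a b)
    (s : Finset ι) (hε : 0 ≤ ε) :
    μ.real {ω | ε ≤ ∑ i ∈ s, (X i ω - μ[X i])} ≤ exp (-2 * ε ^ 2 / (#s * (b - a) ^ 2)) := by
  have hcent : iIndepFun (fun i ω => X i ω - μ[X i]) μ := by
    exact hindep.comp (fun (i : ι) (y : ℝ) => y - μ[X i]) fun i => measurable_sub_const (μ[X i])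
  refine (HasSubgaussianMGF.measure_sum_ge_le_of_iIndepFun hcent
    (c := fun _ => (‖b - a‖₊ / 2) ^ 2)
    (fun i _ => hasSubgaussianMGF_of_mem_Icc (hm i) (hb i)) hε).trans_eq ?_
  simp only [sum_const, nsmul_eq_mul, NNReal.coe_mul, NNReal.coe_natCast, NNReal.coe_pow,
    NNReal.coe_div, coe_nnnorm, norm_eq_abs, NNReal.coe_ofNat, div_pow, sq_abs]
  generalize (b - a) ^ 2 = c
  ring_nf

theorem measure_sum_sub_integral_le_neg_le_of_mem_Icc (hindep : iIndepFun X μ)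
    (hm : ∀ i, AEMeasurable (X i) μ) (hb : ∀ i, ∀ᵐ ω ∂μ, X i ω ∈ Set.Icc a b)
    (s : Finset ι) (hε : 0 ≤ ε) :
    μ.real {ω | ∑ i ∈ s, (X i ω - μ[X i]) ≤ -ε} ≤ exp (-2 * ε ^ 2 / (#s * (b - a) ^ 2)) := by
  have hneg := measure_sum_sub_integral_ge_le_of_mem_Icc (X := fun i ω => -X i ω)
    (hindep.comp (fun _ x => -x) (fun _ => measurable_neg)) (fun i => (hm i).neg)
    (fun i => (hb i).mono fun ω h => ⟨neg_le_neg h.2, neg_le_neg h.1⟩) s hε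
  convert hneg using 3
  · ext ω
    simp only [integral_neg, sub_neg_eq_add, sum_add_distrib, sum_sub_distrib, sum_neg_distrib]
    constructor <;> intro h <;> linarith
  · ring

end Hoeffding

section Score

variable {Ω : Type*} [MeasurableSpace Ω] {μ : Measure Ω} {n : ℕ} {ν : Fin n → Ω → ℝ}

theorem iIndepFun_cos_mul (hindep : iIndepFun ν μ) (τ : ℝ) :
    iIndepFun (fun j ω => cos (τ * ν j ω)) μ := by
  exact hindep.comp (fun _ x => cos (τ * x)) fun _ => by fun_prop

variable [IsProbabilityMeasure μ]

theorem measure_le_sum_cos_mul_le (hmeas : ∀ j, Measurable (ν j)) (hindep : iIndepFun ν μ)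
    {τ t : ℝ} (hτ : ∀ j, ∫ ω, cos (τ * ν j ω) ∂μ ≤ 0) (ht : 0 ≤ t) :
    μ.real {ω | t ≤ ∑ j, cos (τ * ν j ω)} ≤ exp (-t ^ 2 / (2 * n)) := by
  have hoeffding := measure_sum_sub_integral_ge_le_of_mem_Icc (iIndepFun_cos_mul hindep τ)
    (fun j => by fun_prop) (fun j => ae_of_all _ fun ω => ⟨neg_one_le_cos _, cos_le_one _⟩)
    univ ht
  calc μ.real {ω | t ≤ ∑ j, cos (τ * ν j ω)}
      ≤ μ.real {ω | t ≤ ∑ j, (cos (τ * ν j ω) - ∫ ω, cos (τ * ν j ω) ∂μ)} := by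
        refine measureReal_mono fun ω hω => ?_
        simp only [Set.mem_ofPred_eq, sum_sub_distrib] at hω ⊢
        linarith [sum_nonpos fun j (_ : j ∈ univ) => hτ j]
    _ ≤ _ := hoeffding.trans_eq (by simp only [card_univ, Fintype.card_fin]; ring_nf)

theorem measure_sum_cos_mul_le_le (hmeas : ∀ j, Measurable (ν j)) (hindep : iIndepFun ν μ)
    {τ m t : ℝ} (hτ : ∀ j, m ≤ ∫ ω, cos (τ * ν j ω) ∂μ) (ht : t ≤ n * m) :
    μ.real {ω | ∑ j, cos (τ * ν j ω) ≤ t} ≤ exp (-(n * m - t) ^ 2 / (2 * n)) := by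
  have hoeffding := measure_sum_sub_integral_le_neg_le_of_mem_Icc (iIndepFun_cos_mul hindep τ)
    (fun j => by fun_prop) (fun j => ae_of_all _ fun ω => ⟨neg_one_le_cos _, cos_le_one _⟩)
    univ (sub_nonneg.2 ht)
  calc μ.real {ω | ∑ j, cos (τ * ν j ω) ≤ t}
      ≤ μ.real {ω | ∑ j, (cos (τ * ν j ω) - ∫ ω, cos (τ * ν j ω) ∂μ) ≤ -(n * m - t)} := by
        refine measureReal_mono fun ω hω => ?_
        have hmean : ∑ _j : Fin n, m ≤ ∑ j, ∫ ω, cos (τ * ν j ω) ∂μ :=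
          sum_le_sum fun j _ => hτ j
        simp only [Set.mem_ofPred_eq, sum_sub_distrib, sum_const, card_univ, Fintype.card_fin,
          nsmul_eq_mul] at hω hmean ⊢
        linarith
    _ ≤ _ := hoeffding.trans_eq (by simp only [card_univ, Fintype.card_fin]; ring_nf)

end Score

theorem ofReal_one_sub_le_measure_inter_biInter {Ω ι : Type*} [MeasurableSpace Ω]
    {μ : Measure Ω} [IsProbabilityMeasure μ] {A : Set Ω} {B : ι → Set Ω} {s : Finset ι}
    {a : ℝ} {b : ι → ℝ} (hA : μ.real Aᶜ ≤ a) (hB : ∀ i ∈ s, μ.real (B i)ᶜ ≤ b i) :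
    ENNReal.ofReal (1 - (a + ∑ i ∈ s, b i)) ≤ μ (A ∩ ⋂ i ∈ s, B i) := by
  set G := A ∩ ⋂ i ∈ s, B i
  have hcompl : μ.real Gᶜ ≤ a + ∑ i ∈ s, b i := by
    simp only [G, Set.compl_inter, Set.compl_iInter]
    calc μ.real (Aᶜ ∪ ⋃ i ∈ s, (B i)ᶜ)
        ≤ μ.real Aᶜ + ∑ i ∈ s, μ.real (B i)ᶜ :=
          (measureReal_union_le _ _).trans (add_le_add_right (measureReal_biUnion_finset_le _ _) _)
      _ ≤ a + ∑ i ∈ s, b i := add_le_add hA (sum_le_sum hB)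
  have hcover : 1 ≤ μ.real G + μ.real Gᶜ := by
    simpa [Set.union_compl_self] using measureReal_union_le (μ := μ) G Gᶜ
  rw [← ofReal_measureReal]
  exact ENNReal.ofReal_le_ofReal (by linarith)

theorem card_add_one_mul_exp_le {Q : ℝ} (hQ : 0 < Q) {n M : ℕ}
    (hn : 32 / Q ^ 2 * log (20 * (M + 1)) ≤ n) :
    (M + 1) * exp (-(n * Q / 4) ^ 2 / (2 * n)) ≤ 1 / 20 := by
  have hK : 1 < 20 * ((M : ℝ) + 1) := by have := M.cast_nonneg (α := ℝ); linarith
  have hlog : log (20 * (M + 1)) ≤ n * Q ^ 2 / 32 := by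
    rw [div_mul_eq_mul_div, div_le_iff₀ (by positivity)] at hn
    linarith
  have hn0 : (0 : ℝ) < n := by nlinarith [log_pos hK]
  have hexp : (n * Q / 4) ^ 2 / (2 * n) = n * Q ^ 2 / 32 := by field_simp; ring
  calc (M + 1) * exp (-(n * Q / 4) ^ 2 / (2 * n))
      ≤ (M + 1) * exp (-log (20 * (M + 1))) := by
        rw [neg_div, hexp]
        gcongr
    _ = 1 / 20 := by
        rw [exp_neg, exp_log (by linarith)]
        field_simp

theorem delay_finding_correctness_noisy_general
    {Ω : Type*} [MeasurableSpace Ω] (μ : Measure Ω) [IsProbabilityMeasure μ]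
    (Q : ℝ) (hQ0 : 0 < Q)
    (n : ℕ) (ν : Fin n → Ω → ℝ)
    (hmeas : ∀ j, Measurable (ν j))
    (hindep : iIndepFun ν μ)
    (Θ : Finset ℝ)
    (hbad : ∀ τ ∈ Θ, ∀ j, (∫ ω, Real.cos (τ * ν j ω) ∂μ) ≤ 0)
    (τstar : ℝ)
    (hgood : ∀ j, Q / 2 ≤ ∫ ω, Real.cos (τstar * ν j ω) ∂μ)
    (hn : (32 / Q ^ 2) * Real.log (20 * (Θ.card + 1)) ≤ n) :
    ENNReal.ofReal 0.95 ≤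
      μ {ω | (n : ℝ) * Q / 4 ≤ ∑ j, Real.cos (τstar * ν j ω) ∧
             ∀ τ ∈ Θ, ∑ j, Real.cos (τ * ν j ω) < (n : ℝ) * Q / 4} := by
  set e := exp (-(n * Q / 4) ^ 2 / (2 * n))
  have hgoodtail : μ.real {ω | n * Q / 4 ≤ ∑ j, cos (τstar * ν j ω)}ᶜ ≤ e := by
    have hthreshold : (n : ℝ) * Q / 4 ≤ n * (Q / 2) := by
      have : (0 : ℝ) ≤ n * Q := by positivity
      linarith
    calc _ ≤ μ.real {ω | ∑ j, cos (τstar * ν j ω) ≤ n * Q / 4} :=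
          measureReal_mono fun ω hω => by
            simp only [Set.mem_compl_iff, Set.mem_ofPred_eq, not_le] at hω ⊢
            exact hω.le
      _ ≤ e := (measure_sum_cos_mul_le_le hmeas hindep hgood hthreshold).trans_eq (by
            simp only [e]; ring_nf)
  have hbadtail : ∀ τ ∈ Θ, μ.real {ω | ∑ j, cos (τ * ν j ω) < n * Q / 4}ᶜ ≤ e := by
    intro τ hτ
    simpa only [Set.compl_ofPred, not_lt] using
      measure_le_sum_cos_mul_le hmeas hindep (hbad τ hτ) (by positivity)
  have hunion := ofReal_one_sub_le_measure_inter_biInter hgoodtail hbadtail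
  have hsmall := card_add_one_mul_exp_le hQ0 hn
  refine (ENNReal.ofReal_le_ofReal ?_).trans (hunion.trans_eq (congrArg μ ?_))
  · rw [sum_const, nsmul_eq_mul]
    linarith
  · ext ω
    simp

/-- Noisy-signal version of the correctness of the delay-finding algorithm: with
signal-to-noise ratio `Q ∈ (0,1]`, the good candidate's score summand has mean at least
`Q/2`, the acceptance threshold is `n·Q/4`, and `n ≥ (32/Q²)·ln(20·(M+1))` i.i.d. samples
suffice to succeed with probability at least `0.95`. -/
theorem delay_finding_correctness_noisy
    {Ω : Type*} [MeasurableSpace Ω] (μ : Measure Ω) [IsProbabilityMeasure μ]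
    (Q : ℝ) (hQ0 : 0 < Q) (hQ1 : Q ≤ 1)
    (n : ℕ) (ν : Fin n → Ω → ℝ)
    (hmeas : ∀ j, Measurable (ν j))
    (hindep : iIndepFun ν μ)
    (hident : ∀ i j, IdentDistrib (ν i) (ν j) μ μ)
    (Θ : Finset ℝ)
    (hbad : ∀ τ ∈ Θ, ∀ j, (∫ ω, Real.cos (τ * ν j ω) ∂μ) ≤ 0)
    (τstar : ℝ)
    (hgood : ∀ j, Q / 2 ≤ ∫ ω, Real.cos (τstar * ν j ω) ∂μ)
    (hn : (32 / Q ^ 2) * Real.log (20 * (Θ.card + 1)) ≤ n) :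
    ENNReal.ofReal 0.95 ≤
      μ {ω | (n : ℝ) * Q / 4 ≤ ∑ j, Real.cos (τstar * ν j ω) ∧
             ∀ τ ∈ Θ, ∑ j, Real.cos (τ * ν j ω) < (n : ℝ) * Q / 4} :=
  delay_finding_correctness_noisy_general μ Q hQ0 n ν hmeas hindep Θ hbad τstar hgood hn
end

section
/- Let W be a nonnegative real-valued random variable and n > 0 a real number. Suppose E[√W] ≤ √n and that for every s > 0, P(√W − E[√W] > s) ≤ exp(−s²/(2n)). Then for every ε > 0, P(W − n > ε) ≤ exp(−ε/(2n) − 1 + √(1 + ε/n)). -/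
open MeasureTheory

/-! If `W > n + ε` then `√W > √(n + ε)`, so `√W` exceeds its mean `≤ √n` by more than
`s = √(n + ε) - √n`; the sub-Gaussian tail at `s` is the claimed bound, since
`s² / (2n) = 1 + ε / (2n) - √(1 + ε / n)`. -/

lemma neg_sq_sqrt_add_sub_sqrt_div {n ε : ℝ} (hn : 0 < n) (hnε : 0 ≤ n + ε) :
    -(Real.sqrt (n + ε) - Real.sqrt n) ^ 2 / (2 * n)
      = -(ε / (2 * n)) - 1 + Real.sqrt (1 + ε / n) := by
  have hsqrt_n : 0 < Real.sqrt n := Real.sqrt_pos.mpr hn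
  have hratio : Real.sqrt (1 + ε / n) = Real.sqrt (n + ε) / Real.sqrt n := by
    rw [← Real.sqrt_div' _ hn.le]
    congr 1
    field_simp
  rw [hratio]
  field_simp
  nlinarith [Real.sq_sqrt hn.le, Real.sq_sqrt hnε]

lemma setOf_sub_gt_subset_setOf_sqrt_sub_gt {Ω : Type*} (W : Ω → ℝ) {n ε m : ℝ}
    (hnε : 0 ≤ n + ε) (hm : m ≤ Real.sqrt n) :
    {ω | W ω - n > ε} ⊆ {ω | Real.sqrt (W ω) - m > Real.sqrt (n + ε) - Real.sqrt n} := by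
  intro ω (hω : W ω - n > ε)
  have hsqrt : Real.sqrt (n + ε) < Real.sqrt (W ω) := Real.sqrt_lt_sqrt hnε (by linarith)
  show Real.sqrt (W ω) - m > Real.sqrt (n + ε) - Real.sqrt n
  linarith

theorem subexponential_tail_conversion_general
    {Ω : Type*} [MeasurableSpace Ω] (μ : Measure Ω)
    (W : Ω → ℝ)
    (n : ℝ) (hn : 0 < n)
    (hmean : (∫ ω, Real.sqrt (W ω) ∂μ) ≤ Real.sqrt n)
    (htail : ∀ s > (0 : ℝ),
      μ {ω | Real.sqrt (W ω) - (∫ ω', Real.sqrt (W ω') ∂μ) > s}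
        ≤ ENNReal.ofReal (Real.exp (-(s ^ 2) / (2 * n)))) :
    ∀ ε > (0 : ℝ),
      μ {ω | W ω - n > ε}
        ≤ ENNReal.ofReal (Real.exp (-(ε / (2 * n)) - 1 + Real.sqrt (1 + ε / n))) := by
  intro ε hε
  have hnε : 0 ≤ n + ε := by linarith
  have hs : 0 < Real.sqrt (n + ε) - Real.sqrt n :=
    sub_pos.mpr (Real.sqrt_lt_sqrt hn.le (by linarith))
  calc μ {ω | W ω - n > ε}
      ≤ μ {ω | Real.sqrt (W ω) - (∫ ω', Real.sqrt (W ω') ∂μ)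
          > Real.sqrt (n + ε) - Real.sqrt n} :=
        measure_mono (setOf_sub_gt_subset_setOf_sqrt_sub_gt W hnε hmean)
    _ ≤ _ := htail _ hs
    _ = _ := by rw [neg_sq_sqrt_add_sub_sqrt_div hn hnε]

/-- Tail-bound conversion showing that the per-flare score is approximately
sub-exponential: if `W ≥ 0`, `E[√W] ≤ √n`, and `√W` satisfies the sub-Gaussian tail
`P(√W − E[√W] > s) ≤ exp(−s²/(2n))` for all `s > 0`, then for every `ε > 0`,
`P(W − n > ε) ≤ exp(−ε/(2n) − 1 + √(1 + ε/n))`. -/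
theorem subexponential_tail_conversion
    {Ω : Type*} [MeasurableSpace Ω] (μ : Measure Ω) [IsProbabilityMeasure μ]
    (W : Ω → ℝ) (hWmeas : Measurable W) (hWnonneg : ∀ ω, 0 ≤ W ω)
    (n : ℝ) (hn : 0 < n)
    (hmean : (∫ ω, Real.sqrt (W ω) ∂μ) ≤ Real.sqrt n)
    (htail : ∀ s > (0 : ℝ),
      μ {ω | Real.sqrt (W ω) - (∫ ω', Real.sqrt (W ω') ∂μ) > s}
        ≤ ENNReal.ofReal (Real.exp (-(s ^ 2) / (2 * n)))) :
    ∀ ε > (0 : ℝ),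
      μ {ω | W ω - n > ε}
        ≤ ENNReal.ofReal (Real.exp (-(ε / (2 * n)) - 1 + Real.sqrt (1 + ε / n))) :=
  subexponential_tail_conversion_general μ W n hn hmean htail
end

section
/- Fix L ≥ 1 and q₀, …, q_{L−1} ∈ [0,1]. On a probability space, let (X_{k,v}) for 0 ≤ k < L and 0 ≤ v < 2^k be a family of independent {0,1}-valued random variables with P(X_{k,v} = 1) = q_k; for a leaf i ∈ {0,…,2^{L−1}−1} let a_k(i) = ⌊i/2^{L−1−k}⌋ and Y_i = ∏_{k=0}^{L−1} X_{k, a_k(i)}. Let P = ∏_{k=0}^{L−1} q_k. Then Var(Σ_{i=0}^{2^{L−1}−1} Y_i) = 2^{L−1}·P·(1−P) + 2·Σ_{k=0}^{L−2} 2^k·4^{L−2−k}·[ (∏_{m=0}^{k} q_m)·(∏_{m=k+1}^{L−1} q_m²) − P² ]. -/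
/-!
By `variance_fun_sum`, the variance is the double sum of the covariances `cov(Y_i, Y_j)`.
Since every `X` is idempotent, `Y_i Y_j` is the product of `X` over the union of the two
root-to-leaf paths; if the ancestors of `i` and `j` agree on the top `c` layers, this union has
one node in each of those layers and two in each of the others, so
`E[Y_i Y_j] = ∏_{m<c} q_m · ∏_{c≤m<L} q_m²`. The two ancestors in layer `k` agree iff the
leaves agree above bit `L-1-k`, so `c = L - size (i xor j)`. For fixed `i`, `j ↦ i xor j`
permutes the leaves and exactly `2^h` numbers below `2^(L-1)` have bit length `h+1`, so
`c = k+1` occurs for `2^(L-1) · 2^(L-2-k)` ordered pairs.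
-/

open MeasureTheory ProbabilityTheory

/-- The ancestor of leaf `i` (among the `2^(L−1)` leaves) in layer `k` of the complete
binary tree with `L` layers: `a_k(i) = ⌊i / 2^(L−1−k)⌋`, an index among the `2^k` nodes of
layer `k`. -/
def treeAncestor (L : ℕ) (k : Fin L) (i : Fin (2 ^ (L - 1))) : Fin (2 ^ (k : ℕ)) :=
  ⟨(i : ℕ) / 2 ^ (L - 1 - (k : ℕ)), by
    have hk := k.isLt
    have h2 : 0 < 2 ^ (L - 1 - (k : ℕ)) := by positivity
    rw [Nat.div_lt_iff_lt_mul h2]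
    calc (i : ℕ) < 2 ^ (L - 1) := i.isLt
      _ ≤ 2 ^ ((k : ℕ) + (L - 1 - (k : ℕ))) := by
          apply Nat.pow_le_pow_right (by norm_num); omega
      _ = 2 ^ (k : ℕ) * 2 ^ (L - 1 - (k : ℕ)) := pow_add 2 _ _⟩

open Finset

namespace Nat

theorem div_two_pow_eq_iff_size_xor_le {i j t : ℕ} :
    i / 2 ^ t = j / 2 ^ t ↔ (i ^^^ j).size ≤ t := by
  rw [size_le, ← Nat.div_eq_zero_iff_lt (Nat.two_pow_pos t), xor_div_two_pow, xor_eq_zero_iff]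

theorem size_eq_of_mem_Ico {n x : ℕ} (hx : x ∈ Ico (2 ^ n) (2 ^ (n + 1))) : x.size = n + 1 := by
  rw [mem_Ico] at hx
  exact le_antisymm (size_le.2 hx.2) (lt_size.2 hx.1)

theorem sum_range_two_pow_size {M : Type*} [AddCommMonoid M] (f : ℕ → M) (n : ℕ) :
    ∑ x ∈ range (2 ^ n), f x.size = f 0 + ∑ h ∈ range n, 2 ^ h • f (h + 1) := by
  induction n with
  | zero => simp
  | succ n ih =>
    have top : ∑ x ∈ Ico (2 ^ n) (2 ^ (n + 1)), f x.size = 2 ^ n • f (n + 1) := by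
      rw [sum_congr rfl fun x hx => by rw [size_eq_of_mem_Ico hx], sum_const, card_Ico, pow_succ,
        mul_two, Nat.add_sub_cancel]
    rw [range_eq_Ico, ← sum_Ico_consecutive _ (Nat.zero_le _)
      (Nat.pow_le_pow_right two_pos n.le_succ), ← range_eq_Ico, ih, top, sum_range_succ,
      add_assoc]

theorem sum_range_two_pow_xor {M : Type*} [AddCommMonoid M] {i n : ℕ} (hi : i < 2 ^ n)
    (f : ℕ → M) : ∑ j ∈ range (2 ^ n), f (i ^^^ j) = ∑ x ∈ range (2 ^ n), f x :=
  sum_nbij' (i ^^^ ·) (i ^^^ ·) (fun j hj => mem_range.2 (xor_lt_two_pow hi (mem_range.1 hj)))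
    (fun j hj => mem_range.2 (xor_lt_two_pow hi (mem_range.1 hj))) (by simp) (by simp)
    fun _ _ => rfl

theorem sum_sum_fin_two_pow_size_xor {M : Type*} [AddCommMonoid M] (f : ℕ → M) (n : ℕ) :
    ∑ i : Fin (2 ^ n), ∑ j : Fin (2 ^ n), f ((i : ℕ) ^^^ j).size
      = 2 ^ n • (f 0 + ∑ h ∈ range n, 2 ^ h • f (h + 1)) := by
  have inner (i : ℕ) :
      ∑ j : Fin (2 ^ n), f (i ^^^ j).size = ∑ j ∈ range (2 ^ n), f (i ^^^ j).size :=
    Fin.sum_univ_eq_sum_range (fun j => f (i ^^^ j).size) _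
  simp only [inner]
  rw [Fin.sum_univ_eq_sum_range (fun i => ∑ j ∈ range (2 ^ n), f (i ^^^ j).size),
    sum_congr rfl fun i hi => sum_range_two_pow_xor (mem_range.1 hi) (fun x => f x.size),
    sum_const, card_range, sum_range_two_pow_size]

end Nat

theorem prod_mul_prod_eq_prod_sigma_pair {ι M : Type*} [Fintype ι] {β : ι → Type*}
    [∀ k, DecidableEq (β k)] [CommMonoid M] {f : (Σ k, β k) → M} (hf : ∀ s, IsIdempotentElem (f s))
    (a b : ∀ k, β k) :
    (∏ k, f ⟨k, a k⟩) * ∏ k, f ⟨k, b k⟩ = ∏ s ∈ univ.sigma fun k => {a k, b k}, f s := by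
  rw [← prod_mul_distrib, prod_sigma]
  refine prod_congr rfl fun k _ => ?_
  by_cases h : a k = b k
  · rw [h, pair_eq_singleton, prod_singleton, (hf _).eq]
  · rw [prod_pair h]

theorem prod_pow_ite_lt {M : Type*} [CommMonoid M] (q : ℕ → M) {L c : ℕ} (hc : c ≤ L) :
    ∏ k : Fin L, q k ^ (if (k : ℕ) < c then 1 else 2)
      = (∏ m ∈ range c, q m) * ∏ m ∈ Ico c L, q m ^ 2 := by
  rw [Fin.prod_univ_eq_prod_range (fun k => q k ^ (if k < c then 1 else 2)),
    ← prod_range_mul_prod_Ico _ hc]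
  congr 1
  · exact prod_congr rfl fun m hm => by rw [if_pos (mem_range.1 hm), pow_one]
  · exact prod_congr rfl fun m hm => by rw [if_neg (mem_Ico.1 hm).1.not_gt]

def sharedLayers (L : ℕ) (i j : Fin (2 ^ (L - 1))) : ℕ :=
  L - ((i : ℕ) ^^^ j).size

theorem treeAncestor_eq_iff {L : ℕ} (k : Fin L) (i j : Fin (2 ^ (L - 1))) :
    treeAncestor L k i = treeAncestor L k j ↔ (k : ℕ) < sharedLayers L i j := by
  rw [Fin.ext_iff, sharedLayers]
  change (i : ℕ) / 2 ^ (L - 1 - k) = (j : ℕ) / 2 ^ (L - 1 - k) ↔ _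
  rw [Nat.div_two_pow_eq_iff_size_xor_le]
  have := k.isLt
  omega

theorem sum_sum_comp_sharedLayers (f : ℕ → ℝ) (L : ℕ) :
    ∑ i : Fin (2 ^ (L - 1)), ∑ j : Fin (2 ^ (L - 1)), f (sharedLayers L i j)
      = 2 ^ (L - 1) * f L + 2 * ∑ k ∈ range (L - 1), 2 ^ k * 4 ^ (L - 2 - k) * f (k + 1) := by
  simp only [sharedLayers]
  rw [Nat.sum_sum_fin_two_pow_size_xor (fun h => f (L - h)), nsmul_eq_mul, Nat.sub_zero, mul_add,
    ← sum_range_reflect (fun k => 2 ^ k * 4 ^ (L - 2 - k) * f (k + 1)) (L - 1), mul_sum, mul_sum]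
  push_cast
  congr 1
  refine sum_congr rfl fun t ht => ?_
  have ht := mem_range.1 ht
  have e1 : L - 1 - 1 - t + 1 = L - (t + 1) := by omega
  have e2 : L - 2 - (L - 1 - 1 - t) = t := by omega
  have e3 : (2 : ℝ) ^ (L - 1) = 2 * 2 ^ (L - 1 - 1 - t) * 2 ^ t := by
    rw [← pow_succ', ← pow_add]; congr 1; omega
  rw [nsmul_eq_mul, e1, e2, e3, show (4 : ℝ) ^ t = 2 ^ t * 2 ^ t by rw [← mul_pow]; norm_num]
  push_cast
  ring

section Bernoulli

variable {Ω : Type*} [MeasurableSpace Ω] {μ : Measure Ω}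

theorem integral_eq_measureReal_of_forall_eq_zero_or_one {X : Ω → ℝ} (hX : Measurable X)
    (h01 : ∀ ω, X ω = 0 ∨ X ω = 1) : ∫ ω, X ω ∂μ = μ.real {ω | X ω = 1} :=
  calc ∫ ω, X ω ∂μ = ∫ ω, {ω | X ω = 1}.indicator 1 ω ∂μ :=
        integral_congr_ae (ae_of_all _ fun ω => by rcases h01 ω with h | h <;> simp [h])
    _ = μ.real {ω | X ω = 1} := integral_indicator_one (hX (measurableSet_singleton 1))

theorem memLp_prod_of_forall_eq_zero_or_one [IsFiniteMeasure μ] {ι : Type*} {X : ι → Ω → ℝ}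
    (mX : ∀ i, Measurable (X i)) (h01 : ∀ i ω, X i ω = 0 ∨ X i ω = 1) (s : Finset ι)
    (p : ENNReal) : MemLp (fun ω => ∏ i ∈ s, X i ω) p μ :=
  MemLp.of_bound (Finset.measurable_prod s fun i _ => mX i).aestronglyMeasurable 1 <|
    ae_of_all _ fun ω => by
      rw [Real.norm_eq_abs, abs_prod]
      exact prod_le_one (fun _ _ => abs_nonneg _) fun i _ => by
        rcases h01 i ω with h | h <;> simp [h]

theorem ProbabilityTheory.iIndepFun.integral_finset_prod {ι : Type*} {X : ι → Ω → ℝ}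
    (hX : iIndepFun X μ) (mX : ∀ i, AEStronglyMeasurable (X i) μ) (s : Finset ι) :
    ∫ ω, ∏ i ∈ s, X i ω ∂μ = ∏ i ∈ s, ∫ ω, X i ω ∂μ := by
  simp_rw [← prod_coe_sort s]
  exact (hX.precomp (g := ((↑) : s → ι)) Subtype.val_injective).integral_fun_prod_eq_prod_integral
    fun i => mX i

theorem integral_prod_sigma_of_bernoulli {ι : Type*} [Fintype ι] {β : ι → Type*}
    {X : (Σ k, β k) → Ω → ℝ} (hX : iIndepFun X μ) (mX : ∀ s, Measurable (X s))
    (h01 : ∀ s ω, X s ω = 0 ∨ X s ω = 1) {q : ι → ℝ} (hq : ∀ k, 0 ≤ q k)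
    (hdist : ∀ s, μ {ω | X s ω = 1} = ENNReal.ofReal (q s.1)) (T : ∀ k, Finset (β k)) :
    ∫ ω, ∏ s ∈ univ.sigma T, X s ω ∂μ = ∏ k, q k ^ #(T k) := by
  rw [hX.integral_finset_prod (fun s => (mX s).aestronglyMeasurable), prod_sigma]
  refine prod_congr rfl fun k _ => ?_
  rw [← prod_const]
  refine prod_congr rfl fun v _ => ?_
  rw [integral_eq_measureReal_of_forall_eq_zero_or_one (mX _) (h01 _), measureReal_def, hdist,
    ENNReal.toReal_ofReal (hq k)]

theorem covariance_leafIndicators {L : ℕ} {X : (Σ k : Fin L, Fin (2 ^ (k : ℕ))) → Ω → ℝ}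
    (hX : iIndepFun X μ) (mX : ∀ s, Measurable (X s)) (h01 : ∀ s ω, X s ω = 0 ∨ X s ω = 1)
    {q : ℕ → ℝ} (hq : ∀ k, 0 ≤ q k)
    (hdist : ∀ s : Σ k : Fin L, Fin (2 ^ (k : ℕ)), μ {ω | X s ω = 1} = ENNReal.ofReal (q s.1))
    (i j : Fin (2 ^ (L - 1))) :
    cov[fun ω => ∏ k : Fin L, X ⟨k, treeAncestor L k i⟩ ω,
        fun ω => ∏ k : Fin L, X ⟨k, treeAncestor L k j⟩ ω; μ]
      = (∏ m ∈ range (sharedLayers L i j), q m)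
          * ∏ m ∈ Ico (sharedLayers L i j) L, q m ^ 2 - (∏ m ∈ range L, q m) ^ 2 := by
  have := hX.isProbabilityMeasure
  have memLp (a : ∀ k : Fin L, Fin (2 ^ (k : ℕ))) : MemLp (fun ω => ∏ k, X ⟨k, a k⟩ ω) 2 μ :=
    memLp_prod_of_forall_eq_zero_or_one (X := fun k => X ⟨k, a k⟩) (fun _ => mX _)
      (fun _ => h01 _) univ 2
  have integral (T : ∀ k : Fin L, Finset (Fin (2 ^ (k : ℕ)))) :=
    integral_prod_sigma_of_bernoulli hX mX h01 (q := fun k : Fin L => q k) (fun _ => hq _) hdist T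
  have mean (a : ∀ k : Fin L, Fin (2 ^ (k : ℕ))) :
      ∫ ω, ∏ k, X ⟨k, a k⟩ ω ∂μ = ∏ m ∈ range L, q m := by
    have sigma (ω : Ω) : ∏ k, X ⟨k, a k⟩ ω = ∏ s ∈ univ.sigma fun k => {a k}, X s ω := by
      rw [prod_sigma]; simp only [prod_singleton]
    simp_rw [sigma, integral, card_singleton, pow_one]
    exact Fin.prod_univ_eq_prod_range q L
  have card (k : Fin L) : #{treeAncestor L k i, treeAncestor L k j}
      = if (k : ℕ) < sharedLayers L i j then 1 else 2 := by
    simp_rw [← treeAncestor_eq_iff]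
    split_ifs with h
    · rw [h, pair_eq_singleton, card_singleton]
    · exact card_pair h
  have idem (ω : Ω) (s : Σ k : Fin L, Fin (2 ^ (k : ℕ))) : IsIdempotentElem (X s ω) := by
    rcases h01 s ω with h | h <;> simp [IsIdempotentElem, h]
  rw [covariance_eq_sub (memLp _) (memLp _), mean, mean, ← sq]
  simp_rw [Pi.mul_apply, prod_mul_prod_eq_prod_sigma_pair (idem _), integral, card]
  rw [prod_pow_ite_lt q (c := sharedLayers L i j) (Nat.sub_le _ _)]

end Bernoulli

theorem tree_unblocked_count_variance_general
    {Ω : Type*} [MeasurableSpace Ω] (μ : Measure Ω) [IsProbabilityMeasure μ]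
    (L : ℕ) (q : ℕ → ℝ) (hq : ∀ k, q k ∈ Set.Icc (0 : ℝ) 1)
    (X : (Σ k : Fin L, Fin (2 ^ (k : ℕ))) → Ω → ℝ)
    (hmeas : ∀ idx, Measurable (X idx))
    (hindep : iIndepFun X μ)
    (hval : ∀ idx ω, X idx ω = 0 ∨ X idx ω = 1)
    (hdist : ∀ idx : Σ k : Fin L, Fin (2 ^ (k : ℕ)),
      μ {ω | X idx ω = 1} = ENNReal.ofReal (q (idx.1 : ℕ))) :
    variance (fun ω => ∑ i : Fin (2 ^ (L - 1)), ∏ k : Fin L, X ⟨k, treeAncestor L k i⟩ ω) μ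
      = (2 : ℝ) ^ (L - 1) * (∏ m ∈ Finset.range L, q m) * (1 - ∏ m ∈ Finset.range L, q m)
        + 2 * ∑ k ∈ Finset.range (L - 1),
            (2 : ℝ) ^ k * (4 : ℝ) ^ (L - 2 - k) *
              ((∏ m ∈ Finset.range (k + 1), q m) * (∏ m ∈ Finset.Ico (k + 1) L, (q m) ^ 2)
                - (∏ m ∈ Finset.range L, q m) ^ 2) := by
  rw [variance_fun_sum fun i => memLp_prod_of_forall_eq_zero_or_one
    (X := fun k : Fin L => X ⟨k, treeAncestor L k i⟩) (fun _ => hmeas _) (fun _ => hval _) univ 2]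
  simp_rw [covariance_leafIndicators hindep hmeas hval (fun k => (hq k).1) hdist]
  rw [sum_sum_comp_sharedLayers (fun c => (∏ m ∈ range c, q m) * ∏ m ∈ Ico c L, q m ^ 2
    - (∏ m ∈ range L, q m) ^ 2)]
  simp only [Ico_self, prod_empty, mul_one]
  ring

/-- Variance of the number of unblocked ray bundles in the binary-tree dust-extinction
model: with `P = ∏_k q_k` the photon survival probability,
`Var(Σ_i Y_i) = 2^(L−1)·P·(1−P)
  + 2·Σ_{k=0}^{L−2} 2^k·4^(L−2−k)·[(∏_{m=0}^{k} q_m)·(∏_{m=k+1}^{L−1} q_m²) − P²]`. -/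
theorem tree_unblocked_count_variance
    {Ω : Type*} [MeasurableSpace Ω] (μ : Measure Ω) [IsProbabilityMeasure μ]
    (L : ℕ) (hL : 1 ≤ L) (q : ℕ → ℝ) (hq : ∀ k, q k ∈ Set.Icc (0 : ℝ) 1)
    (X : (Σ k : Fin L, Fin (2 ^ (k : ℕ))) → Ω → ℝ)
    (hmeas : ∀ idx, Measurable (X idx))
    (hindep : iIndepFun X μ)
    (hval : ∀ idx ω, X idx ω = 0 ∨ X idx ω = 1)
    (hdist : ∀ idx : Σ k : Fin L, Fin (2 ^ (k : ℕ)),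
      μ {ω | X idx ω = 1} = ENNReal.ofReal (q (idx.1 : ℕ))) :
    variance (fun ω => ∑ i : Fin (2 ^ (L - 1)), ∏ k : Fin L, X ⟨k, treeAncestor L k i⟩ ω) μ
      = (2 : ℝ) ^ (L - 1) * (∏ m ∈ Finset.range L, q m) * (1 - ∏ m ∈ Finset.range L, q m)
        + 2 * ∑ k ∈ Finset.range (L - 1),
            (2 : ℝ) ^ k * (4 : ℝ) ^ (L - 2 - k) *
              ((∏ m ∈ Finset.range (k + 1), q m) * (∏ m ∈ Finset.Ico (k + 1) L, (q m) ^ 2)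
                - (∏ m ∈ Finset.range L, q m) ^ 2) :=
  tree_unblocked_count_variance_general μ L q hq X hmeas hindep hval hdist
end
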